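/- arXiv:2009.08701 — 5 statements merged into one kernel-verified Lean document; each statement's English description precedes it below -/
import Mathlib

section
/- For vectors z_1, ..., z_N ∈ ℂ^(d+1) with ‖z_j‖ = 1 for all j, and z_c := (1/N) ∑_j z_j, if the equilibrium equations κ₀(z_c - ⟨z_c, z_j⟩ z_j) + κ₁(⟨z_j, z_c⟩ - ⟨z_c, z_j⟩) z_j = 0 hold for all j with κ₀ > 0 and κ₁ ≥ 0, then z_c = ⟨z_c, z_j⟩ z_j for all j. Conversely, if z_c = ⟨z_c, z_j⟩ z_j for all j, then the equilibrium equations hold. -/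
open scoped ComplexInnerProductSpace

theorem equilibrium_characterization {d N : ℕ} (hN : 0 < N)
    (z : Fin N → EuclideanSpace ℂ (Fin (d+1)))
    (hz : ∀ j, ‖z j‖ = 1) (κ₀ κ₁ : ℝ) (hκ₀ : 0 < κ₀) (hκ₁ : 0 ≤ κ₁)
    (zc : EuclideanSpace ℂ (Fin (d+1))) (hzc : zc = (N : ℂ)⁻¹ • ∑ j, z j) :
    (∀ j, (κ₀ : ℂ) • (zc - ⟪zc, z j⟫ • z j)
        + (κ₁ : ℂ) • ((⟪z j, zc⟫ - ⟪zc, z j⟫) • z j) = 0)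
      ↔ (∀ j, zc = ⟪zc, z j⟫ • z j) := by
  have hzz : ∀ j, ⟪z j, z j⟫ = 1 := by
    intro j
    rw [inner_self_eq_norm_sq_to_K, hz j]
    norm_num
  constructor
  · intro h j
    have hj := h j
    set a := ⟪zc, z j⟫ with ha
    have key : ((κ₀ : ℂ) + κ₁) * (⟪z j, zc⟫ - a) = 0 := by
      have hi := congrArg (fun w => ⟪z j, w⟫) hj
      simp only [inner_add_right, inner_smul_right, inner_sub_right, hzz j,
        inner_zero_right] at hi
      ring_nf at hi ⊢
      linear_combination hi
    have hne : ((κ₀ : ℂ) + κ₁) ≠ 0 := by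
      have : (0:ℝ) < κ₀ + κ₁ := by linarith
      simp only [← Complex.ofReal_add]
      exact_mod_cast ne_of_gt this
    have h2 : ⟪z j, zc⟫ = a := by
      rcases mul_eq_zero.mp key with h' | h'
      · exact absurd h' hne
      · exact sub_eq_zero.mp h'
    rw [h2, sub_self, zero_smul, smul_zero, add_zero, smul_eq_zero] at hj
    rcases hj with h' | h'
    · exact absurd h' (by exact_mod_cast ne_of_gt hκ₀)
    · exact sub_eq_zero.mp h'
  · intro h j
    have hj := h j
    set a := ⟪zc, z j⟫ with ha
    have h2 : ⟪z j, zc⟫ = a := by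
      rw [hj, inner_smul_right, hzz j, mul_one]
    rw [h2, sub_self, zero_smul, smul_zero, add_zero, ← hj, sub_self, smul_zero]
end

section
/- Let a, b, c, d be real constants with a, b, c > 0 and b² - 4ac > 0, and let y : [0,∞) → ℝ be a nonnegative C² function satisfying a y'' + b y' + c y + d ≤ 0 on (0,∞). Set ν₁ := (b + √(b²-4ac))/(2a). If y(0) + d/c < 0 and y'(0) + ν₁ y(0) + 2d/(b - √(b²-4ac)) < 0, then y(t) < -d/c for all t ≥ 0. -/
/-!
With `ν₁, ν₂` the roots of `a ν² - b ν + c`, the operator `a D² + b D + c` factors as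
`a (D + ν₂)(D + ν₁)`. Applied to `w = y + d/c`, the hypothesis says `(D + ν₂) u ≤ 0` for
`u = w' + ν₁ w`, and the two initial conditions say `u 0 < 0` and `w 0 < 0`. A first-order
Gronwall argument (`exp (ν t) f t` is antitone when `f' + ν f ≤ 0`) gives `u < 0`, and then,
applied once more, `w < 0`.
-/

open Real Set

theorem antitoneOn_exp_mul_of_deriv_add_mul_nonpos {f f' : ℝ → ℝ} {ν : ℝ}
    (hf : ∀ t ≥ 0, HasDerivAt f (f' t) t) (h : ∀ t > 0, f' t + ν * f t ≤ 0) :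
    AntitoneOn (fun t => exp (ν * t) * f t) (Ici 0) := by
  have hF : ∀ t ≥ 0, HasDerivAt (fun t => exp (ν * t) * f t)
      (exp (ν * t) * (f' t + ν * f t)) t := fun t ht =>
    (((hasDerivAt_id' t).const_mul ν).exp.mul (hf t ht)).congr_deriv (by ring)
  refine antitoneOn_of_hasDerivWithinAt_nonpos (f' := fun t => exp (ν * t) * (f' t + ν * f t))
    (convex_Ici 0)
    (fun t ht => (hF t ht).continuousAt.continuousWithinAt) (fun t ht => ?_) (fun t ht => ?_)
  · rw [interior_Ici] at ht
    exact (hF t (le_of_lt ht)).hasDerivWithinAt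
  · rw [interior_Ici] at ht
    exact mul_nonpos_of_nonneg_of_nonpos (exp_pos _).le (h t ht)

theorem neg_of_deriv_add_mul_nonpos {f f' : ℝ → ℝ} {ν : ℝ}
    (hf : ∀ t ≥ 0, HasDerivAt f (f' t) t) (h : ∀ t > 0, f' t + ν * f t ≤ 0) (h0 : f 0 < 0) :
    ∀ t ≥ 0, f t < 0 := by
  intro t ht
  have hle : exp (ν * t) * f t ≤ exp (ν * 0) * f 0 :=
    antitoneOn_exp_mul_of_deriv_add_mul_nonpos hf h self_mem_Ici ht ht
  rw [mul_zero, exp_zero, one_mul] at hle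
  exact neg_of_mul_neg_right (hle.trans_lt h0) (exp_pos _).le

theorem neg_of_second_order_ineq {w w' w'' : ℝ → ℝ} {a b c ν₁ ν₂ : ℝ} (ha : 0 < a)
    (hsum : a * (ν₁ + ν₂) = b) (hprod : a * (ν₁ * ν₂) = c)
    (hw : ∀ t ≥ 0, HasDerivAt w (w' t) t) (hw' : ∀ t ≥ 0, HasDerivAt w' (w'' t) t)
    (hineq : ∀ t > 0, a * w'' t + b * w' t + c * w t ≤ 0)
    (h0 : w 0 < 0) (h0' : w' 0 + ν₁ * w 0 < 0) :
    ∀ t ≥ 0, w t < 0 := by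
  have hu : ∀ t ≥ 0, HasDerivAt (fun t => w' t + ν₁ * w t) (w'' t + ν₁ * w' t) t :=
    fun t ht => (hw' t ht).add ((hw t ht).const_mul ν₁)
  have hu_ineq : ∀ t > 0, (w'' t + ν₁ * w' t) + ν₂ * (w' t + ν₁ * w t) ≤ 0 := by
    intro t ht
    have hfactor : a * ((w'' t + ν₁ * w' t) + ν₂ * (w' t + ν₁ * w t))
        = a * w'' t + b * w' t + c * w t := by
      rw [← hsum, ← hprod]; ring
    exact nonpos_of_mul_nonpos_right (hfactor ▸ hineq t ht) ha
  have hu_neg := neg_of_deriv_add_mul_nonpos hu hu_ineq h0'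
  exact neg_of_deriv_add_mul_nonpos hw (fun t ht => (hu_neg t ht.le).le) h0

theorem second_order_gronwall_overdamped_general (a b c d : ℝ)
    (ha : 0 < a) (hc : 0 < c) (hdisc : 0 < b^2 - 4*a*c)
    (y : ℝ → ℝ) (hy : ContDiff ℝ 2 y)
    (hineq : ∀ t > (0:ℝ), a * deriv (deriv y) t + b * deriv y t + c * y t + d ≤ 0)
    (ν₁ : ℝ) (hν₁ : ν₁ = (b + Real.sqrt (b^2 - 4*a*c))/(2*a))
    (h1 : y 0 + d/c < 0)
    (h2 : deriv y 0 + ν₁ * y 0 + 2*d/(b - Real.sqrt (b^2 - 4*a*c)) < 0) :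
    ∀ t ≥ (0:ℝ), y t < -d/c := by
  set s := Real.sqrt (b^2 - 4*a*c)
  have hs : s ^ 2 = b^2 - 4*a*c := sq_sqrt hdisc.le
  have hsum : a * (ν₁ + (b - s) / (2*a)) = b := by rw [hν₁]; field_simp; ring
  have hprod : a * (ν₁ * ((b - s) / (2*a))) = c := by
    rw [hν₁]; field_simp; linear_combination -hs
  have hroot : ν₁ * (b - s) = 2 * c := by
    rw [← hprod]; field_simp
  have hbs : b - s ≠ 0 := fun h => by simp [h, hc.ne'] at hroot
  have hshift : 2*d/(b - s) = ν₁ * (d/c) := by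
    field_simp; linear_combination (-d) * hroot
  have hdy : Differentiable ℝ y := hy.differentiable (by norm_num)
  have hddy : Differentiable ℝ (deriv y) := hy.differentiable_deriv_two
  intro t ht
  have hneg := neg_of_second_order_ineq (w := fun t => y t + d/c) ha hsum hprod
    (fun t _ => (hdy t).hasDerivAt.add_const (d/c)) (fun t _ => (hddy t).hasDerivAt)
    (fun t ht => by rw [mul_add, mul_div_cancel₀ d hc.ne']; linarith [hineq t ht]) h1
    (by rw [mul_add, ← hshift, ← add_assoc]; exact h2) t ht
  rw [neg_div]; linarith

theorem second_order_gronwall_overdamped (a b c d : ℝ)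
    (ha : 0 < a) (hb : 0 < b) (hc : 0 < c) (hdisc : 0 < b^2 - 4*a*c)
    (y : ℝ → ℝ) (hy : ContDiff ℝ 2 y) (hynn : ∀ t ≥ (0:ℝ), 0 ≤ y t)
    (hineq : ∀ t > (0:ℝ), a * deriv (deriv y) t + b * deriv y t + c * y t + d ≤ 0)
    (ν₁ : ℝ) (hν₁ : ν₁ = (b + Real.sqrt (b^2 - 4*a*c))/(2*a))
    (h1 : y 0 + d/c < 0)
    (h2 : deriv y 0 + ν₁ * y 0 + 2*d/(b - Real.sqrt (b^2 - 4*a*c)) < 0) :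
    ∀ t ≥ (0:ℝ), y t < -d/c :=
  second_order_gronwall_overdamped_general a b c d ha hc hdisc y hy hineq ν₁ hν₁ h1 h2
end

section
/- Let a, b, c, d be real constants with a, b, c > 0 and b² - 4ac < 0, and let y : [0,∞) → ℝ be a nonnegative C² function satisfying a y'' + b y' + c y + d ≤ 0 on (0,∞). If y(0) < -4ad/b² and (b/(2a)) y(0) + y'(0) + 2d/b < 0, then y(t) < -4ad/b² for all t ≥ 0. -/
open Real Set

/-! With `L = b/(2a)` and `K = -4ad/b²`, the operator `a y'' + b y' + (b²/4a) y + d` factors as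
`a (D + L)² (y - K)`, and `b²/4a < c` together with `y ≥ 0` makes it nonpositive. Two applications
of the first-order comparison `f' + L f ≤ 0, f 0 < 0 ⟹ f < 0` (via the integrating factor `e^{Lt}`),
first to `v = (y - K)' + L (y - K)` and then to `y - K`, give the claim. -/

theorem exp_mul_mul_le_of_deriv_add_mul_nonpos {f : ℝ → ℝ} {L : ℝ}
    (hf : ContinuousOn f (Ici 0)) (hf' : DifferentiableOn ℝ f (Ioi 0))
    (h : ∀ t > 0, deriv f t + L * f t ≤ 0) {t : ℝ} (ht : 0 ≤ t) :
    exp (L * t) * f t ≤ f 0 := by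
  have hanti : AntitoneOn (fun s => exp (L * s) * f s) (Ici 0) := by
    refine antitoneOn_of_hasDerivWithinAt_nonpos (convex_Ici 0)
      ((continuous_exp.comp (continuous_const_mul L)).continuousOn.mul hf)
      (f' := fun s => exp (L * s) * (deriv f s + L * f s)) (fun s hs => ?_) (fun s hs => ?_)
    · rw [interior_Ici] at hs
      have hexp : HasDerivAt (fun s => exp (L * s)) (exp (L * s) * L) s := by
        simpa using ((hasDerivAt_id s).const_mul L).exp
      refine ((hexp.mul ((hf'.differentiableAt (Ioi_mem_nhds hs)).hasDerivAt)).congr_deriv ?_)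
        |>.hasDerivWithinAt
      ring
    · rw [interior_Ici] at hs
      exact mul_nonpos_of_nonneg_of_nonpos (exp_pos _).le (h s hs)
  simpa using hanti self_mem_Ici ht ht

theorem neg_of_deriv_add_mul_nonpos_s9 {f : ℝ → ℝ} {L : ℝ}
    (hf : ContinuousOn f (Ici 0)) (hf' : DifferentiableOn ℝ f (Ioi 0))
    (h : ∀ t > 0, deriv f t + L * f t ≤ 0) (h0 : f 0 < 0) {t : ℝ} (ht : 0 ≤ t) : f t < 0 :=
  neg_of_mul_neg_right ((exp_mul_mul_le_of_deriv_add_mul_nonpos hf hf' h ht).trans_lt h0)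
    (exp_pos _).le

theorem critically_damped_nonpos_of_discrim_neg {a b c d y y' y'' : ℝ} (ha : 0 < a) (hb : b ≠ 0)
    (hdisc : b^2 - 4*a*c < 0) (hy : 0 ≤ y) (h : a * y'' + b * y' + c * y + d ≤ 0) :
    let L := b / (2 * a)
    y'' + L * y' + L * (y' + L * (y - -(4*a*d)/b^2)) ≤ 0 := by
  intro L
  have hfactor : a * (y'' + L * y' + L * (y' + L * (y - -(4*a*d)/b^2))) =
      a * y'' + b * y' + b^2 / (4*a) * y + d := by
    simp only [L]; field_simp; ring
  have hcoef : b^2 / (4*a) * y ≤ c * y :=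
    mul_le_mul_of_nonneg_right (by rw [div_le_iff₀ (by positivity)]; linarith) hy
  exact nonpos_of_mul_nonpos_right (by linarith) ha

theorem second_order_gronwall_underdamped_general (a b c d : ℝ)
    (ha : 0 < a) (hb : 0 < b) (hdisc : b^2 - 4*a*c < 0)
    (y : ℝ → ℝ) (hy : ContDiff ℝ 2 y) (hynn : ∀ t ≥ (0:ℝ), 0 ≤ y t)
    (hineq : ∀ t > (0:ℝ), a * deriv (deriv y) t + b * deriv y t + c * y t + d ≤ 0)
    (h1 : y 0 < -(4*a*d)/b^2)
    (h2 : (b/(2*a)) * y 0 + deriv y 0 + 2*d/b < 0) :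
    ∀ t ≥ (0:ℝ), y t < -(4*a*d)/b^2 := by
  set L := b / (2 * a)
  set K := -(4*a*d)/b^2
  have hy1 : Differentiable ℝ y := hy.differentiable (by norm_num)
  have hy2 : Differentiable ℝ (deriv y) :=
    ((contDiff_succ_iff_deriv (n := 1)).mp hy).2.2.differentiable (by norm_num)
  set v := fun t => deriv y t + L * (y t - K)
  have hv : Differentiable ℝ v := hy2.add ((hy1.sub_const K).const_mul L)
  have hv_deriv : ∀ t > 0, deriv v t + L * v t ≤ 0 := by
    intro t ht
    have hderiv : deriv v t = deriv (deriv y) t + L * deriv y t :=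
      ((hy2 t).hasDerivAt.add (((hy1 t).hasDerivAt.sub_const K).const_mul L)).deriv
    rw [hderiv]
    exact critically_damped_nonpos_of_discrim_neg ha hb.ne' hdisc (hynn t ht.le) (hineq t ht)
  have hv0 : v 0 = L * y 0 + deriv y 0 + 2*d/b := by simp only [v, L, K]; field_simp; ring
  have hv_neg : ∀ t ≥ 0, v t < 0 := fun t =>
    neg_of_deriv_add_mul_nonpos_s9 hv.continuous.continuousOn hv.differentiableOn hv_deriv
      (hv0 ▸ h2)
  have hz : Differentiable ℝ (fun t => y t - K) := hy1.sub_const K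
  intro t ht
  refine sub_neg.mp (neg_of_deriv_add_mul_nonpos_s9 (L := L) hz.continuous.continuousOn
    hz.differentiableOn (fun s hs => ?_) (sub_neg.mpr h1) ht)
  rw [deriv_sub_const]
  exact (hv_neg s hs.le).le

theorem second_order_gronwall_underdamped (a b c d : ℝ)
    (ha : 0 < a) (hb : 0 < b) (hc : 0 < c) (hdisc : b^2 - 4*a*c < 0)
    (y : ℝ → ℝ) (hy : ContDiff ℝ 2 y) (hynn : ∀ t ≥ (0:ℝ), 0 ≤ y t)
    (hineq : ∀ t > (0:ℝ), a * deriv (deriv y) t + b * deriv y t + c * y t + d ≤ 0)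
    (h1 : y 0 < -(4*a*d)/b^2)
    (h2 : (b/(2*a)) * y 0 + deriv y 0 + 2*d/b < 0) :
    ∀ t ≥ (0:ℝ), y t < -(4*a*d)/b^2 :=
  second_order_gronwall_underdamped_general a b c d ha hb hdisc y hy hynn hineq h1 h2
end

section
/- Let a, b, c > 0 and let y : [0,∞) → ℝ be a nonnegative C² function with a y''(t) + b y'(t) + c y(t) ≤ f(t) for t > 0, where f : [0,∞) → ℝ is nonnegative, C¹, and lim_{t→∞} f(t) = 0. Then lim_{t→∞} y(t) = 0. -/
/-!
Since `y ≥ 0`, the operator `a D² + b D + c` dominates `a (D + m) (D + l)` for suitable rates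
`l, m > 0` with `a (l + m) = b` and `a l m ≤ c`. Hence `w = y' + l y` satisfies
`w' + m w ≤ f / a`, and the first-order comparison `u' + l u ≤ l δ ⇒ u ≤ δ + e^{-l t} (u 0 - δ)`
shows that `w` is eventually below any `ε > 0`. The same comparison applied to `y' + l y = w`
gives the same for `y`, and `y ≥ 0` closes the squeeze.
-/

open Real Filter Topology Set

theorem exists_pos_factorization_le {a b c : ℝ} (ha : 0 < a) (hb : 0 < b) (hc : 0 < c) :
    ∃ l m : ℝ, 0 < l ∧ 0 < m ∧ a * (l + m) = b ∧ a * (l * m) ≤ c := by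
  set l := min (b / (2 * a)) (c / b)
  have hl : 0 < l := lt_min (by positivity) (by positivity)
  have hal : a * l ≤ b / 2 :=
    (mul_le_mul_of_nonneg_left (min_le_left _ _) ha.le).trans_eq (by field_simp)
  have hbl : b * l ≤ c :=
    (mul_le_mul_of_nonneg_left (min_le_right _ _) hb.le).trans_eq (by field_simp)
  refine ⟨l, (b - a * l) / a, hl, div_pos (by linarith) ha, by field_simp; ring, ?_⟩
  rw [mul_left_comm, mul_div_cancel₀ _ ha.ne']
  nlinarith [mul_pos ha (mul_pos hl hl)]

theorem le_add_exp_mul_of_deriv_add_mul_le {u : ℝ → ℝ} {l δ T : ℝ} (hu : Differentiable ℝ u)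
    (h : ∀ t > T, deriv u t + l * u t ≤ l * δ) {t : ℝ} (ht : T ≤ t) :
    u t ≤ δ + exp (-(l * (t - T))) * (u T - δ) := by
  set v : ℝ → ℝ := fun s => exp (l * (s - T)) * (u s - δ)
  have hv : ∀ s, HasDerivAt v (exp (l * (s - T)) * (deriv u s + l * u s - l * δ)) s := by
    intro s
    have hexp : HasDerivAt (fun s => exp (l * (s - T))) (exp (l * (s - T)) * l) s := by
      simpa using (((hasDerivAt_id s).sub_const T).const_mul l).exp
    exact (hexp.mul ((hu s).hasDerivAt.sub_const δ)).congr_deriv (by ring)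
  have hv_anti : AntitoneOn v (Ici T) := by
    refine antitoneOn_of_hasDerivWithinAt_nonpos (convex_Ici T)
      (fun s _ => (hv s).continuousAt.continuousWithinAt)
      (fun s _ => (hv s).hasDerivWithinAt) fun s hs => ?_
    rw [interior_Ici] at hs
    exact mul_nonpos_of_nonneg_of_nonpos (exp_pos _).le (by linarith [h s hs])
  have hvt : v t ≤ u T - δ := by simpa [v] using hv_anti self_mem_Ici ht ht
  calc u t = δ + exp (-(l * (t - T))) * v t := by
        simp only [v, ← mul_assoc, ← exp_add, neg_add_cancel, exp_zero, one_mul]; ring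
    _ ≤ δ + exp (-(l * (t - T))) * (u T - δ) := by gcongr

theorem eventually_lt_of_deriv_add_mul_lt {u : ℝ → ℝ} {l : ℝ} (hl : 0 < l)
    (hu : Differentiable ℝ u) (h : ∀ ε > 0, ∀ᶠ t in atTop, deriv u t + l * u t < ε) :
    ∀ ε > 0, ∀ᶠ t in atTop, u t < ε := by
  intro ε hε
  obtain ⟨T, hT⟩ := eventually_atTop.1 (h (l * (ε / 2)) (by positivity))
  have hdecay : Tendsto (fun t => exp (-(l * (t - T))) * (u T - ε / 2)) atTop (𝓝 0) := by
    simpa [sub_eq_add_neg] using (tendsto_exp_neg_atTop_nhds_zero.comp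
      ((tendsto_atTop_add_const_right _ (-T) tendsto_id).const_mul_atTop hl)).mul_const
      (u T - ε / 2)
  filter_upwards [eventually_ge_atTop T, hdecay.eventually (gt_mem_nhds (half_pos hε))]
    with t ht hsmall
  have := le_add_exp_mul_of_deriv_add_mul_le hu (fun s hs => (hT s hs.le).le) ht
  linarith

theorem second_order_gronwall_vanishing_forcing_general (a b c : ℝ)
    (ha : 0 < a) (hb : 0 < b) (hc : 0 < c)
    (y f : ℝ → ℝ) (hy : ContDiff ℝ 2 y) (hynn : ∀ t ≥ (0:ℝ), 0 ≤ y t)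
    (hflim : Filter.Tendsto f Filter.atTop (nhds 0))
    (hineq : ∀ t > (0:ℝ), a * deriv (deriv y) t + b * deriv y t + c * y t ≤ f t) :
    Filter.Tendsto y Filter.atTop (nhds 0) := by
  obtain ⟨l, m, hl, hm, hsum, hprod⟩ := exists_pos_factorization_le ha hb hc
  have hy₁ : Differentiable ℝ y := hy.differentiable (by norm_num)
  have hy₂ : Differentiable ℝ (deriv y) := hy.differentiable_deriv_two
  set w : ℝ → ℝ := fun t => deriv y t + l * y t
  have hw_deriv (t : ℝ) : deriv w t = deriv (deriv y) t + l * deriv y t :=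
    ((hy₂ t).hasDerivAt.add ((hy₁ t).hasDerivAt.const_mul l)).deriv
  have hw_ineq (t : ℝ) (ht : 0 < t) : deriv w t + m * w t ≤ f t / a := by
    rw [hw_deriv, le_div_iff₀ ha, show w t = deriv y t + l * y t from rfl]
    have h := hineq t ht
    rw [← hsum] at h
    nlinarith [mul_le_mul_of_nonneg_right hprod (hynn t ht.le)]
  have hfa : Tendsto (fun t => f t / a) atTop (𝓝 0) := by simpa using hflim.div_const a
  have hw_small : ∀ ε > 0, ∀ᶠ t in atTop, w t < ε :=
    eventually_lt_of_deriv_add_mul_lt hm (hy₂.add (hy₁.const_mul l)) fun ε hε => by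
      filter_upwards [eventually_gt_atTop 0, hfa.eventually (gt_mem_nhds hε)] with t ht hft
      exact (hw_ineq t ht).trans_lt hft
  have hy_small := eventually_lt_of_deriv_add_mul_lt hl hy₁ hw_small
  exact tendsto_order.2
    ⟨fun ε hε => (eventually_ge_atTop 0).mono fun t ht => hε.trans_le (hynn t ht), hy_small⟩

theorem second_order_gronwall_vanishing_forcing (a b c : ℝ)
    (ha : 0 < a) (hb : 0 < b) (hc : 0 < c)
    (y f : ℝ → ℝ) (hy : ContDiff ℝ 2 y) (hynn : ∀ t ≥ (0:ℝ), 0 ≤ y t)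
    (hf : ContDiff ℝ 1 f) (hfnn : ∀ t ≥ (0:ℝ), 0 ≤ f t)
    (hflim : Filter.Tendsto f Filter.atTop (nhds 0))
    (hineq : ∀ t > (0:ℝ), a * deriv (deriv y) t + b * deriv y t + c * y t ≤ f t) :
    Filter.Tendsto y Filter.atTop (nhds 0) :=
  second_order_gronwall_vanishing_forcing_general a b c ha hb hc y f hy hynn hflim hineq
end

section
/- Let g be an N×N matrix of complex numbers with |g_{ij}| ≤ 2 and conj(g_{ij}) = g_{ji}, and set G := (1/N²) ∑_{i,j} |g_{ij}|². Then (1/N³) ∑_{i,j,k} (|g_{ik}| + |g_{jk}|) |g_{ij}|² ≤ 2 √N · G^{3/2}. -/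
/-!
Write `a i j = ‖g i j‖`, a symmetric real matrix, `rᵢ = ∑ₖ aᵢₖ` and `sᵢ = ∑ⱼ aᵢⱼ²`.
Summing over `k` first and using the symmetry, the triple sum is `2 ∑ᵢ rᵢ sᵢ`.
Cauchy–Schwarz gives `rᵢ ≤ √N √sᵢ ≤ √N √S` with `S = ∑ᵢ sᵢ`, so the triple sum is at most
`2 √N S^{3/2}`; dividing by `N³` turns `S^{3/2}` into `G^{3/2}`.
-/

open Finset

theorem Finset.sum_le_sqrt_card_mul_sqrt_sum_sq {ι : Type*} (s : Finset ι) (f : ι → ℝ) :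
    ∑ i ∈ s, f i ≤ √(#s : ℝ) * √(∑ i ∈ s, f i ^ 2) := by
  rw [← Real.sqrt_mul (Nat.cast_nonneg _)]
  exact (le_abs_self _).trans (Real.abs_le_sqrt (sq_sum_le_card_mul_sum_sq ..))

theorem Real.rpow_three_halves {x : ℝ} (hx : 0 ≤ x) : x ^ ((3 : ℝ) / 2) = √x * x := by
  rw [show (3 : ℝ) / 2 = 1 / 2 + 1 by norm_num, Real.rpow_add' hx (by norm_num),
    Real.rpow_one, Real.sqrt_eq_rpow]

section SymmetricMatrix

variable {ι : Type*} [Fintype ι] (a : ι → ι → ℝ)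

theorem sum_sum_sum_add_mul_sq_eq_of_symm (ha : ∀ i j, a i j = a j i) :
    ∑ i, ∑ j, ∑ k, (a i k + a j k) * a i j ^ 2
      = 2 * ∑ i, (∑ k, a i k) * ∑ j, a i j ^ 2 := by
  have hswap : ∑ i, ∑ j, (∑ k, a j k) * a i j ^ 2 = ∑ i, ∑ j, (∑ k, a i k) * a i j ^ 2 := by
    rw [sum_comm]
    simp only [ha]
  simp only [← sum_mul, sum_add_distrib, add_mul, hswap]
  rw [← two_mul]
  simp only [mul_sum]

theorem sum_rowSum_mul_rowSqSum_le :
    ∑ i, (∑ k, a i k) * ∑ j, a i j ^ 2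
      ≤ √(Fintype.card ι : ℝ) * (∑ i, ∑ j, a i j ^ 2) ^ ((3 : ℝ) / 2) := by
  set S := ∑ i, ∑ j, a i j ^ 2
  have hrow_nonneg : ∀ i, 0 ≤ ∑ j, a i j ^ 2 := fun i => sum_nonneg fun j _ => sq_nonneg _
  have hrow_le : ∀ i, ∑ j, a i j ^ 2 ≤ S := fun i =>
    single_le_sum (fun i _ => hrow_nonneg i) (mem_univ i)
  calc ∑ i, (∑ k, a i k) * ∑ j, a i j ^ 2
      ≤ ∑ i, √(Fintype.card ι : ℝ) * √S * ∑ j, a i j ^ 2 := by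
        gcongr with i _
        calc ∑ k, a i k ≤ √(Fintype.card ι : ℝ) * √(∑ k, a i k ^ 2) :=
              sum_le_sqrt_card_mul_sqrt_sum_sq _ _
          _ ≤ √(Fintype.card ι : ℝ) * √S := by grw [hrow_le i]
    _ = √(Fintype.card ι : ℝ) * S ^ ((3 : ℝ) / 2) := by
        rw [← mul_sum, Real.rpow_three_halves (sum_nonneg fun i _ => hrow_nonneg i), mul_assoc]

theorem sum_sum_sum_add_mul_sq_le_of_symm (ha : ∀ i j, a i j = a j i) :
    ∑ i, ∑ j, ∑ k, (a i k + a j k) * a i j ^ 2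
      ≤ 2 * √(Fintype.card ι : ℝ) * (∑ i, ∑ j, a i j ^ 2) ^ ((3 : ℝ) / 2) := by
  rw [sum_sum_sum_add_mul_sq_eq_of_symm a ha, mul_assoc]
  gcongr
  exact sum_rowSum_mul_rowSqSum_le a

end SymmetricMatrix

theorem cubic_term_estimate_general {N : ℕ} (g : Fin N → Fin N → ℂ)
    (hconj : ∀ i j, (starRingEnd ℂ) (g i j) = g j i)
    (G : ℝ) (hG : G = ((N:ℝ)^2)⁻¹ * ∑ i, ∑ j, ‖g i j‖^2) :
    ((N:ℝ)^3)⁻¹ * ∑ i, ∑ j, ∑ k,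
        (‖g i k‖ + ‖g j k‖) * ‖g i j‖^2
      ≤ 2 * Real.sqrt N * G ^ ((3:ℝ)/2) := by
  have hsymm : ∀ i j, ‖g i j‖ = ‖g j i‖ := fun i j => by
    rw [← hconj, Complex.norm_conj]
  have hS : 0 ≤ ∑ i, ∑ j, ‖g i j‖ ^ 2 := by positivity
  have hscale : G ^ ((3:ℝ)/2) = ((N:ℝ)^3)⁻¹ * (∑ i, ∑ j, ‖g i j‖ ^ 2) ^ ((3:ℝ)/2) := by
    rw [hG, Real.mul_rpow (by positivity) hS, Real.inv_rpow (by positivity),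
      ← Real.rpow_natCast, ← Real.rpow_mul (Nat.cast_nonneg N)]
    norm_num
  have key := sum_sum_sum_add_mul_sq_le_of_symm (fun i j => ‖g i j‖) hsymm
  rw [Fintype.card_fin] at key
  rw [hscale, mul_left_comm]
  gcongr

theorem cubic_term_estimate {N : ℕ} (hN : 0 < N) (g : Fin N → Fin N → ℂ)
    (hb : ∀ i j, ‖g i j‖ ≤ 2)
    (hconj : ∀ i j, (starRingEnd ℂ) (g i j) = g j i)
    (G : ℝ) (hG : G = ((N:ℝ)^2)⁻¹ * ∑ i, ∑ j, ‖g i j‖^2) :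
    ((N:ℝ)^3)⁻¹ * ∑ i, ∑ j, ∑ k,
        (‖g i k‖ + ‖g j k‖) * ‖g i j‖^2
      ≤ 2 * Real.sqrt N * G ^ ((3:ℝ)/2) :=
  cubic_term_estimate_general g hconj G hG
end
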